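/- arXiv:1601.00637 — 3 statements merged into one kernel-verified Lean document; each statement's English description precedes it below -/
import Mathlib

section
/- Let E be a filtered complex in an abelian category with decreasing filtration F. Define filtered truncations by τ^F_{≥n}E_i = d^{−1}(F^{n+1−i}E_{i−1}) ∩ F^{n−i}E_i and τ^F_{≤n}E_i = E_i/(F^{n+1−i}E_i + d(F^{n−i}E_{i+1})). Then for all integers i, j there are natural isomorphisms gr^j_F τ^F_{≥i}E ≅ τ_{≥ i−j} gr^j_F E and gr^j_F τ^F_{≤i}E ≅ τ_{≤ i−j} gr^j_F E, where τ_{≥n}, τ_{≤n} on the right are the usual canonical truncations of complexes. -/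
section
variable {R : Type} [Ring R] {E : ℤ → Type}
variable [∀ i, AddCommGroup (E i)] [∀ i, Module R (E i)]

/-- Cast along an equality of degrees. -/
def castE {i i' : ℤ} (e : i = i') : E i ≃ₗ[R] E i' :=
  e ▸ LinearEquiv.refl R (E i)

end

/-!
In degree `m` the two truncation conditions compare the filtration indices `a + 1 - m` and
`a - m` with `j`. For `m > a - j` they hold on all of `F^j`, for `m < a - j` they force
everything into `F^{j+1}`, and at `m = a - j` they say exactly `d x ∈ F^{j+1}` and "modulo
`d(F^j E_{m+1})`", i.e. they cut out the kernel and cokernel of the induced differential on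
`gr^j`. Since `gr^j τ^F_{≥a}E` injects into `gr^j E`, the first isomorphism is an equality of
submodules of `gr^j E`.
-/

namespace Submodule

variable {R M N : Type*} [Ring R] [AddCommGroup M] [Module R M] [AddCommGroup N] [Module R N]

theorem comap_subtype_sup_of_le {p A B : Submodule R M} (hB : B ≤ p) :
    comap p.subtype (A ⊔ B) = comap p.subtype A ⊔ comap p.subtype B := by
  apply map_injective_of_injective p.injective_subtype
  rw [map_sup, map_comap_subtype, map_comap_subtype, map_comap_subtype, inf_eq_right.mpr hB,
    inf_comm, sup_comm, sup_inf_assoc_of_le A hB, inf_comm, sup_comm]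

variable {S : Submodule R M} {T : Submodule R N} {f : M →ₗ[R] N} {g : M ⧸ S →ₗ[R] N ⧸ T}

theorem ker_eq_map_mkQ_comap_of_induced (hg : ∀ x, g (S.mkQ x) = T.mkQ (f x)) :
    LinearMap.ker g = (T.comap f).map S.mkQ := by
  have hcomp : g.comp S.mkQ = T.mkQ.comp f := LinearMap.ext hg
  rw [← map_comap_eq_of_surjective S.mkQ_surjective (LinearMap.ker g), ← LinearMap.ker_comp,
    hcomp, LinearMap.ker_comp, ker_mkQ]

theorem range_eq_map_mkQ_range_of_induced (hg : ∀ x, g (S.mkQ x) = T.mkQ (f x)) :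
    LinearMap.range g = (LinearMap.range f).map T.mkQ := by
  have hcomp : g.comp S.mkQ = T.mkQ.comp f := LinearMap.ext hg
  rw [← LinearMap.range_comp_of_range_eq_top g S.range_mkQ, hcomp, LinearMap.range_comp]

def quotientRangeEquivQuotientSup {U : Submodule R N} {h : M →ₗ[R] N ⧸ T}
    (hh : LinearMap.range h = U.map T.mkQ) :
    ((N ⧸ T) ⧸ LinearMap.range h) ≃ₗ[R] N ⧸ (T ⊔ U) :=
  (quotEquivOfEq _ _ (by rw [hh, map_sup, mkQ_map_self, bot_sup_eq])).trans
    (quotientQuotientEquivQuotient T (T ⊔ U) le_sup_left)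

end Submodule

lemma castE_mem {R : Type} [Ring R] {E : ℤ → Type} [∀ i, AddCommGroup (E i)]
    [∀ i, Module R (E i)] {p : ∀ i, Submodule R (E i)} {i i' : ℤ} (e : i = i') {x : E i}
    (hx : x ∈ p i) : (castE e : E i ≃ₗ[R] E i') x ∈ p i' := by
  subst e; exact hx

section FilteredComplex

open Submodule

variable {R : Type*} [Ring R] {E : ℤ → Type*} [∀ i, AddCommGroup (E i)] [∀ i, Module R (E i)]

def filteredTruncGE (d : ∀ i : ℤ, E i →ₗ[R] E (i - 1)) (F : ℤ → ∀ i : ℤ, Submodule R (E i))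
    (a m : ℤ) : Submodule R (E m) :=
  (F (a + 1 - m) (m - 1)).comap (d m) ⊓ F (a - m) m

/-- `τ^F_{≤a}E_m = E_m ⧸ filteredTruncLEKer dIn F a m`. -/
def filteredTruncLEKer (dIn : ∀ m : ℤ, E (m + 1) →ₗ[R] E m)
    (F : ℤ → ∀ i : ℤ, Submodule R (E i)) (a m : ℤ) : Submodule R (E m) :=
  F (a + 1 - m) m ⊔ (F (a - m) (m + 1)).map (dIn m)

variable {F : ℤ → ∀ i : ℤ, Submodule R (E i)} {a j m : ℤ}

section TruncGE

variable {d : ∀ i : ℤ, E i →ₗ[R] E (i - 1)} (hF : Antitone F)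
  (hstab : ∀ j i : ℤ, ∀ x ∈ F j i, d i x ∈ F j (i - 1))
include hF hstab

theorem comap_subtype_filteredTruncGE_eq_top (h : a - j < m) :
    comap (F j m).subtype (filteredTruncGE d F a m) = ⊤ :=
  comap_subtype_eq_top.mpr fun x hx =>
    ⟨hF (by omega) (m - 1) (hstab j m x hx), hF (by omega) m hx⟩

omit hF in
theorem comap_subtype_filteredTruncGE_of_eq (h : m = a - j) :
    comap (F j m).subtype (filteredTruncGE d F a m) =
      comap ((d m).restrict (hstab j m)) (comap (F j (m - 1)).subtype (F (j + 1) (m - 1))) := by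
  ext x
  simp only [filteredTruncGE, mem_comap, mem_inf, subtype_apply, LinearMap.restrict_apply,
    show a + 1 - m = j + 1 by omega, show a - m = j by omega, x.2, and_true]

omit hstab in
theorem comap_subtype_filteredTruncGE_le (h : m < a - j) :
    comap (F j m).subtype (filteredTruncGE d F a m) ≤ comap (F j m).subtype (F (j + 1) m) :=
  fun _ hx => hF (by omega) m hx.2

theorem map_mkQ_comap_subtype_filteredTruncGE
    {dbar : (F j m ⧸ comap (F j m).subtype (F (j + 1) m)) →ₗ[R]
      (F j (m - 1) ⧸ comap (F j (m - 1)).subtype (F (j + 1) (m - 1)))}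
    (hdbar : ∀ x : F j m, dbar (mkQ _ x) = mkQ _ ⟨d m x, hstab j m x x.2⟩) :
    (comap (F j m).subtype (filteredTruncGE d F a m)).map (mkQ _) =
      if a - j < m then ⊤ else if m = a - j then LinearMap.ker dbar else ⊥ := by
  split_ifs with hlt heq
  · rw [comap_subtype_filteredTruncGE_eq_top hF hstab hlt, Submodule.map_top, range_mkQ]
  · rw [comap_subtype_filteredTruncGE_of_eq hstab heq,
      ker_eq_map_mkQ_comap_of_induced (f := (d m).restrict (hstab j m)) hdbar]
  · rw [eq_bot_iff, map_le_iff_le_comap, comap_bot, ker_mkQ]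
    exact comap_subtype_filteredTruncGE_le hF (by omega)

end TruncGE

section TruncLE

variable {dIn : ∀ m : ℤ, E (m + 1) →ₗ[R] E m} (hF : Antitone F)
  (hdIn : ∀ k m : ℤ, ∀ x ∈ F k (m + 1), dIn m x ∈ F k m)
include hF hdIn

theorem filteredTruncLEKer_le (h : m < a - j) : filteredTruncLEKer dIn F a m ≤ F (j + 1) m :=
  sup_le (hF (by omega) m) (map_le_iff_le_comap.mpr fun x hx => hF (by omega) m (hdIn _ m x hx))

omit hdIn in
theorem le_filteredTruncLEKer (h : a - j < m) : F j m ≤ filteredTruncLEKer dIn F a m :=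
  le_sup_of_le_left (hF (by omega) m)

omit hF in
theorem comap_subtype_sup_filteredTruncLEKer_of_eq (h : m = a - j) :
    comap (F j m).subtype (F (j + 1) m ⊔ filteredTruncLEKer dIn F a m) =
      comap (F j m).subtype (F (j + 1) m) ⊔ LinearMap.range ((dIn m).restrict (hdIn j m)) := by
  rw [filteredTruncLEKer, show a + 1 - m = j + 1 by omega, show a - m = j by omega,
    ← sup_assoc, sup_idem, comap_subtype_sup_of_le (map_le_iff_le_comap.mpr (hdIn j m)),
    LinearMap.range_restrict]

end TruncLE

end FilteredComplex

theorem statement7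
    (R : Type) [Ring R] (E : ℤ → Type)
    [∀ i, AddCommGroup (E i)] [∀ i, Module R (E i)]
    (d : ∀ i : ℤ, E i →ₗ[R] E (i - 1))
    (F : ℤ → ∀ i : ℤ, Submodule R (E i))
    (hdec : ∀ ⦃j j' : ℤ⦄, j ≤ j' → ∀ i, F j' i ≤ F j i)
    (hstab : ∀ j i : ℤ, ∀ x ∈ F j i, d i x ∈ F j (i - 1))
    -- the incoming differential `E (m+1) → E m` (the same `d`, with degrees normalized):
    (dIn : ∀ m : ℤ, E (m + 1) →ₗ[R] E m)
    (hdIn : ∀ m : ℤ, dIn m =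
      ((castE (show m + 1 - 1 = m by ring)).toLinearMap).comp (d (m + 1))) :
    -- induced differentials on the graded pieces exist; for any such choice:
    ∀ (grq : ∀ j m : ℤ, F j m →ₗ[R]
        (F j m ⧸ Submodule.comap (F j m).subtype (F (j + 1) m))),
      (∀ j m, grq j m = (Submodule.comap (F j m).subtype (F (j + 1) m)).mkQ) →
    ∀ (dbarOut : ∀ j m : ℤ,
        (F j m ⧸ Submodule.comap (F j m).subtype (F (j + 1) m)) →ₗ[R]
        (F j (m - 1) ⧸ Submodule.comap (F j (m - 1)).subtype (F (j + 1) (m - 1))))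
      (dbarIn : ∀ j m : ℤ,
        (F j (m + 1) ⧸ Submodule.comap (F j (m + 1)).subtype (F (j + 1) (m + 1))) →ₗ[R]
        (F j m ⧸ Submodule.comap (F j m).subtype (F (j + 1) m))),
      -- `dbarOut`/`dbarIn` are induced by `d`/`dIn`:
      (∀ j m : ℤ, ∀ x : F j m,
        dbarOut j m (grq j m x) = grq j (m - 1) ⟨d m x, hstab j m x x.2⟩) →
      (∀ j m : ℤ, ∀ hIn : ∀ x : F j (m + 1), dIn m x ∈ F j m,
        ∀ x : F j (m + 1), dbarIn j m (grq j (m + 1) x) = grq j m ⟨dIn m x, hIn x⟩) →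
    ∀ a j m : ℤ,
      -- (1)  gr^j τ^F_{≥a} E ≅ τ_{≥ a-j} gr^j E :
      (Submodule.map (grq j m)
          (Submodule.comap (F j m).subtype
            (Submodule.comap (d m) (F (a + 1 - m) (m - 1)) ⊓ F (a - m) m)) =
        if a - j < m then ⊤
        else if m = a - j then LinearMap.ker (dbarOut j m)
        else ⊥) ∧
      -- (2)  gr^j τ^F_{≤a} E ≅ τ_{≤ a-j} gr^j E :
      ((m < a - j → Nonempty
          ((F j m ⧸ Submodule.comap (F j m).subtype
              (F (j + 1) m ⊔ (F (a + 1 - m) m ⊔ Submodule.map (dIn m) (F (a - m) (m + 1)))))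
            ≃ₗ[R] (F j m ⧸ Submodule.comap (F j m).subtype (F (j + 1) m)))) ∧
       (m = a - j → Nonempty
          ((F j m ⧸ Submodule.comap (F j m).subtype
              (F (j + 1) m ⊔ (F (a + 1 - m) m ⊔ Submodule.map (dIn m) (F (a - m) (m + 1)))))
            ≃ₗ[R] ((F j m ⧸ Submodule.comap (F j m).subtype (F (j + 1) m)) ⧸
                LinearMap.range (dbarIn j m)))) ∧
       (a - j < m → Subsingleton
          (F j m ⧸ Submodule.comap (F j m).subtype
            (F (j + 1) m ⊔ (F (a + 1 - m) m ⊔ Submodule.map (dIn m) (F (a - m) (m + 1))))))) := by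
  intro grq hgrq dbarOut dbarIn hOut hIn a j m
  obtain rfl : grq = fun j m => (Submodule.comap (F j m).subtype (F (j + 1) m)).mkQ :=
    funext₂ hgrq
  have hdInF : ∀ k m : ℤ, ∀ x ∈ F k (m + 1), dIn m x ∈ F k m := fun k m x hx => by
    rw [hdIn]
    exact castE_mem _ (hstab k (m + 1) x hx)
  have hrange : LinearMap.range (dbarIn j m) =
      (LinearMap.range ((dIn m).restrict (hdInF j m))).map (Submodule.mkQ _) :=
    Submodule.range_eq_map_mkQ_range_of_induced (hIn j m fun x => hdInF j m x x.2)
  refine ⟨map_mkQ_comap_subtype_filteredTruncGE hdec hstab (hOut j m),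
    fun h => ?_, fun h => ?_, fun h => ?_⟩
  · exact ⟨Submodule.quotEquivOfEq _ _
      (congrArg (Submodule.comap _) (sup_eq_left.mpr (filteredTruncLEKer_le hdec hdInF h)))⟩
  · exact ⟨(Submodule.quotEquivOfEq _ _
      (comap_subtype_sup_filteredTruncLEKer_of_eq hdInF h)).trans
        (Submodule.quotientRangeEquivQuotientSup hrange).symm⟩
  · exact Submodule.Quotient.subsingleton_iff.mpr <| Submodule.comap_subtype_eq_top.mpr <|
      le_sup_of_le_right (le_filteredTruncLEKer hdec h)
end

section
/- Let k be a perfect field of characteristic p > 0 and V a complex of k-vector spaces. With C(V) = τ^F_{[0,1]} Č*(Z/pZ, V^{⊗_k p}) as above, there is a functorial sequence 0 → V^{(1)}[1] →^{b} C(V) →^{a} V^{(1)} → 0 that is quasiexact: a∘b = 0, a is surjective, b is injective, and the complex ker(a)/im(b) is acyclic. Here V^{(1)} is the Frobenius twist of V. -/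
open scoped TensorProduct

/-- `k^{(1)}`: the ring `k` viewed as a module over itself via the absolute Frobenius. -/
def FrobeniusModule (k : Type) (p : ℕ) : Type := k

instance (k : Type) (p : ℕ) [CommRing k] : AddCommGroup (FrobeniusModule k p) :=
  inferInstanceAs (AddCommGroup k)

noncomputable instance (k : Type) (p : ℕ) [CommRing k] [Fact p.Prime] [CharP k p] :
    Module k (FrobeniusModule k p) :=
  Module.compHom k (frobenius k p)

/-- The Frobenius twist `V^{(1)} = V ⊗_k k^{(1)}`. -/
noncomputable def FrobeniusTwist (k : Type) (p : ℕ) [CommRing k] [Fact p.Prime] [CharP k p]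
    (V : Type) [AddCommGroup V] [Module k V] : Type :=
  V ⊗[k] (FrobeniusModule k p)

noncomputable instance (k : Type) (p : ℕ) [CommRing k] [Fact p.Prime] [CharP k p]
    (V : Type) [AddCommGroup V] [Module k V] : AddCommGroup (FrobeniusTwist k p V) :=
  inferInstanceAs (AddCommGroup (V ⊗[k] (FrobeniusModule k p)))

noncomputable instance (k : Type) (p : ℕ) [CommRing k] [Fact p.Prime] [CharP k p]
    (V : Type) [AddCommGroup V] [Module k V] : Module k (FrobeniusTwist k p V) :=
  inferInstanceAs (Module k (V ⊗[k] (FrobeniusModule k p)))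

/-!
Choose a basis `(e_i)` of `V`. The pure tensors `e_{g 0} ⊗ ⋯ ⊗ e_{g (p-1)}`, `g : Fin p → ι`, form
a basis of `V^{⊗p}` that `σ` permutes by rotating `g`. The fixed tuples are the constant ones; they
span a copy of `V` on which `σ = 1` and `N = p = 0`. The other orbits are free of size `p`, and on
their span the Tate cohomology vanishes: an invariant vector is the norm of its restriction to one
point of each orbit, and since `N = (1 - σ)^(p-1)` in characteristic `p`, a descending induction on
the powers of `1 - σ` turns this into `ker N = im (1 - σ)`. So `a` and `b` are the projection onto
and the inclusion of the fixed part, identified with `V^{(1)}` by `v ↦ v ⊗ 1`, an isomorphism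
because `k` is perfect.
-/

open Finset LinearMap

namespace Equiv.Perm

variable {F : Type*} {π : Equiv.Perm F}

theorem apply_pow_apply_of_invariant {β : Type*} {φ : F → β}
    (hφ : ∀ g, φ (π g) = φ g) (i : ℕ) (g : F) : φ ((π ^ i) g) = φ g := by
  induction i with
  | zero => rfl
  | succ i ih => rw [pow_succ', mul_apply, hφ, ih]

theorem sum_range_pow_apply_eq_zero {k : Type*} [Semiring k] (p : ℕ) [CharP k p] {X : F → k}
    (hX : ∀ g, X (π g) = X g) (g : F) : ∑ i ∈ range p, X ((π ^ i) g) = 0 := by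
  simp [apply_pow_apply_of_invariant hX]

variable {p : ℕ} [Fact p.Prime]

theorem injOn_pow_apply_of_pow_eq_one (hπ : π ^ p = 1) {g : F} (hg : π g ≠ g) :
    Set.InjOn (fun i => (π ^ i) g) (Set.Iio p) := by
  have hper : Function.IsPeriodicPt π p g := by
    rw [Function.IsPeriodicPt, Function.IsFixedPt, ← coe_pow, hπ, one_apply]
  simpa [coe_pow, Function.minimalPeriod_eq_prime hper hg] using
    Function.iterate_injOn_Iio_minimalPeriod (f := π) (x := g)

theorem SameCycle.exists_pow_lt_of_pow_eq_one (hπ : π ^ p = 1) {g h : F}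
    (hgh : π.SameCycle g h) : ∃ i < p, (π ^ i) g = h := by
  obtain ⟨i, rfl⟩ := hgh
  have hp : (0 : ℤ) < p := by exact_mod_cast (Fact.out : p.Prime).pos
  refine ⟨(i % p).toNat, by have := Int.emod_lt_of_pos i hp; omega, ?_⟩
  rw [zpow_eq_zpow_emod' i hπ, ← zpow_natCast, Int.toNat_of_nonneg (Int.emod_nonneg _ hp.ne')]

open Classical in
/-- `Y` is `X` restricted to one point of each free orbit; such an orbit has exactly `p` points. -/
theorem exists_sum_range_pow_apply_eq {k : Type*} [AddCommMonoid k] (hπ : π ^ p = 1)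
    (X : F →₀ k) (hX : ∀ g, X (π g) = X g) :
    ∃ Y : F →₀ k, ∀ g, ∑ i ∈ range p, Y ((π ^ i) g) = if π g = g then 0 else X g := by
  let rep : F → F := fun g => (Quotient.mk (SameCycle.setoid π) g).out
  have rep_pow (i : ℕ) (g : F) : rep ((π ^ i) g) = rep g :=
    congrArg Quotient.out (Quotient.sound (sameCycle_pow_left.mpr (SameCycle.refl π g)))
  refine ⟨X.filter fun g => rep g = g ∧ π g ≠ g, fun g => ?_⟩
  split_ifs with hg
  · simp [pow_apply_eq_self_of_apply_eq_self hg, hg]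
  obtain ⟨j, hj, hjg⟩ := SameCycle.exists_pow_lt_of_pow_eq_one hπ
    (Quotient.mk_out (s := SameCycle.setoid π) g).symm
  rw [Finset.sum_eq_single_of_mem j (mem_range.mpr hj)]
  · rw [Finsupp.filter_apply_pos _ _
      ⟨by rw [rep_pow, hjg], (apply_pow_apply_eq_iff π j).not.mpr hg⟩,
      apply_pow_apply_of_invariant hX]
  · intro i hi hij
    refine Finsupp.filter_apply_neg _ _ fun hrep => hij ?_
    exact injOn_pow_apply_of_pow_eq_one hπ hg (mem_range.mp hi) hj
      ((hrep.1.symm.trans (rep_pow i g)).trans hjg.symm)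

end Equiv.Perm

open Polynomial in
theorem Polynomial.sum_range_X_pow_eq_one_sub_X_pow {R : Type*} [CommRing R] [IsDomain R]
    (p : ℕ) [Fact p.Prime] [CharP R p] :
    ∑ i ∈ range p, (X : R[X]) ^ i = (1 - X) ^ (p - 1) := by
  have hp : p - 1 + 1 = p := Nat.sub_add_cancel (Fact.out : p.Prime).one_le
  have hX : (1 - X : R[X]) ≠ 0 := fun h => by simpa using congrArg (eval 0) h
  apply mul_left_cancel₀ hX
  rw [mul_neg_geom_sum, ← pow_succ', hp, sub_pow_char, one_pow]

open Polynomial in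
theorem Module.End.sum_range_pow_eq_one_sub_pow {k M : Type*} [CommRing k] [IsDomain k]
    [AddCommGroup M] [Module k M] (p : ℕ) [Fact p.Prime] [CharP k p] (σ : Module.End k M) :
    ∑ i ∈ range p, σ ^ i = (1 - σ) ^ (p - 1) := by
  simpa using congrArg (aeval σ) (sum_range_X_pow_eq_one_sub_X_pow (R := k) p)

theorem Module.End.sub_mem_range_pow_of_pow_succ_apply_eq_zero {R M : Type*} [Ring R]
    [AddCommGroup M] [Module R M] {D P : Module.End R M} (hPD : ∀ x, P (D x) = 0)
    {n : ℕ} (h : ∀ y, D y = 0 → y - P y ∈ range (D ^ n)) :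
    ∀ j y, (D ^ (j + 1)) y = 0 → y - P y ∈ range (D ^ (n - j)) := by
  intro j
  induction j with
  | zero => simpa using h
  | succ j ih =>
    intro y hy
    obtain hn | ⟨m, hm⟩ : n - (j + 1) = 0 ∨ ∃ m, n - (j + 1) = m + 1 :=
      (n - (j + 1)).eq_zero_or_eq_succ_pred.imp id fun h => ⟨_, h⟩
    · simp [hn]
    obtain ⟨z, hz⟩ : D y - P (D y) ∈ range (D ^ (n - j)) :=
      ih (D y) (by rwa [← Module.End.mul_apply, ← pow_succ])
    rw [hPD, sub_zero, show n - j = m + 1 + 1 by omega, pow_succ', Module.End.mul_apply] at hz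
    have hker : D (y - (D ^ (m + 1)) z) = 0 := by rw [map_sub, hz, sub_self]
    obtain ⟨u, hu⟩ := h _ hker
    have hPu : P ((D ^ (m + 1)) z) = 0 := by rw [pow_succ', Module.End.mul_apply, hPD]
    refine ⟨(D ^ (n - (m + 1))) u + z, ?_⟩
    rw [hm, map_add, ← Module.End.mul_apply, ← pow_add, Nat.add_sub_cancel' (by omega), hu,
      map_sub, hPu]
    abel

section Splitting

variable {k T : Type*} [CommRing k] [AddCommGroup T] [Module k T]

/-- `T` is the direct sum of a summand `W`, on which `σ = 1` and `N = 0`, and of a complement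
with vanishing Tate cohomology `ker (1 - σ) / im N` and `ker N / im (1 - σ)`. -/
structure TateSplitting (σ N : Module.End k T) (W : Type*) [AddCommGroup W] [Module k W] where
  proj : T →ₗ[k] W
  incl : W →ₗ[k] T
  proj_incl (w : W) : proj (incl w) = w
  sub_apply_incl (w : W) : (1 - σ) (incl w) = 0
  norm_incl (w : W) : N (incl w) = 0
  proj_norm (x : T) : proj (N x) = 0
  proj_sub_apply (x : T) : proj ((1 - σ) x) = 0
  sub_incl_proj_mem_range_norm (x : T) : (1 - σ) x = 0 → x - incl (proj x) ∈ range N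
  sub_incl_proj_mem_range_sub (x : T) : N x = 0 → x - incl (proj x) ∈ range (1 - σ)

namespace TateSplitting

variable {σ N : Module.End k T} {W U : Type*} [AddCommGroup W] [Module k W]
  [AddCommGroup U] [Module k U]

def congr (S : TateSplitting σ N W) (e : W ≃ₗ[k] U) : TateSplitting σ N U where
  proj := e.toLinearMap ∘ₗ S.proj
  incl := S.incl ∘ₗ e.symm.toLinearMap
  proj_incl w := by simp [S.proj_incl]
  sub_apply_incl w := S.sub_apply_incl _
  norm_incl w := S.norm_incl _
  proj_norm x := by simp [S.proj_norm]
  proj_sub_apply x := by simp only [LinearMap.comp_apply, S.proj_sub_apply, map_zero]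
  sub_incl_proj_mem_range_norm x hx := by simpa using S.sub_incl_proj_mem_range_norm x hx
  sub_incl_proj_mem_range_sub x hx := by simpa using S.sub_incl_proj_mem_range_sub x hx

theorem exists_quasiexact (S : TateSplitting σ N W)
    (dV : (T ⧸ range (1 - σ)) →ₗ[k] ker (1 - σ))
    (hdV : ∀ y : T, (dV (Submodule.Quotient.mk y) : T) = N y) :
    ∃ (a : ker (1 - σ) →ₗ[k] W) (b : W →ₗ[k] T ⧸ range (1 - σ)),
      a ∘ₗ dV = 0 ∧ dV ∘ₗ b = 0 ∧ Function.Surjective a ∧ Function.Injective b ∧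
      (∀ dbar : ((T ⧸ range (1 - σ)) ⧸ range b) →ₗ[k] ker a,
        (∀ y : T ⧸ range (1 - σ), ((dbar (Submodule.Quotient.mk y) : ker a) : ker (1 - σ))
            = dV y) →
        Function.Bijective dbar) := by
  refine ⟨S.proj ∘ₗ (ker (1 - σ)).subtype, (range (1 - σ)).mkQ ∘ₗ S.incl,
    ?_, ?_, ?_, ?_, ?_⟩
  · ext y
    simp [hdV, S.proj_norm]
  · ext w
    simp [hdV, S.norm_incl]
  · intro w
    exact ⟨⟨S.incl w, S.sub_apply_incl w⟩, S.proj_incl w⟩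
  · rw [← LinearMap.ker_eq_bot, LinearMap.ker_eq_bot']
    rintro w hw
    obtain ⟨u, hu⟩ := (Submodule.Quotient.mk_eq_zero _).mp hw
    rw [← S.proj_incl w, ← hu, S.proj_sub_apply]
  intro dbar hdbar
  constructor
  · refine (injective_iff_map_eq_zero dbar).mpr fun t ht => ?_
    obtain ⟨y, rfl⟩ := Submodule.Quotient.mk_surjective _ t
    obtain ⟨x, rfl⟩ := Submodule.Quotient.mk_surjective _ y
    have hNx : N x = 0 := by
      rw [← hdV, ← hdbar, ht]; rfl
    obtain ⟨u, hu⟩ := S.sub_incl_proj_mem_range_sub x hNx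
    refine (Submodule.Quotient.mk_eq_zero _).mpr ⟨S.proj x, ?_⟩
    rw [LinearMap.comp_apply, Submodule.mkQ_apply, Submodule.Quotient.eq]
    exact ⟨-u, by rw [map_neg, hu, neg_sub]⟩
  · rintro ⟨⟨z, hz⟩, hza⟩
    have hpz : S.proj z = 0 := hza
    obtain ⟨u, hu⟩ := S.sub_incl_proj_mem_range_norm z hz
    refine ⟨Submodule.Quotient.mk (Submodule.Quotient.mk u), ?_⟩
    ext
    simp [hdbar, hdV, hu, hpz]

/-- In characteristic `p` we have `N = (1 - σ) ^ (p - 1)`, so the vanishing of `ker N / im (1 - σ)`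
on the complement follows from that of `ker (1 - σ) / im N`. -/
def ofSumPow [IsDomain k] (p : ℕ) [Fact p.Prime] [CharP k p] (proj : T →ₗ[k] W) (incl : W →ₗ[k] T)
    (proj_incl : ∀ w, proj (incl w) = w) (sub_apply_incl : ∀ w, (1 - σ) (incl w) = 0)
    (norm_incl : ∀ w, (∑ i ∈ range p, σ ^ i) (incl w) = 0)
    (proj_norm : ∀ x, proj ((∑ i ∈ range p, σ ^ i) x) = 0)
    (proj_sub_apply : ∀ x, proj ((1 - σ) x) = 0)
    (sub_incl_proj_mem_range_norm : ∀ x, (1 - σ) x = 0 →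
      x - incl (proj x) ∈ range (∑ i ∈ range p, σ ^ i)) :
    TateSplitting σ (∑ i ∈ range p, σ ^ i) W where
  proj := proj
  incl := incl
  proj_incl := proj_incl
  sub_apply_incl := sub_apply_incl
  norm_incl := norm_incl
  proj_norm := proj_norm
  proj_sub_apply := proj_sub_apply
  sub_incl_proj_mem_range_norm := sub_incl_proj_mem_range_norm
  sub_incl_proj_mem_range_sub x hx := by
    have hp := (Fact.out : p.Prime).two_le
    rw [Module.End.sum_range_pow_eq_one_sub_pow] at sub_incl_proj_mem_range_norm hx
    simpa [show p - 1 - (p - 2) = 1 by omega] using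
      Module.End.sub_mem_range_pow_of_pow_succ_apply_eq_zero (D := 1 - σ) (P := incl ∘ₗ proj)
        (fun x => by rw [LinearMap.comp_apply, proj_sub_apply, map_zero])
        sub_incl_proj_mem_range_norm (p - 2) x
        (by rwa [show p - 2 + 1 = p - 1 by omega])

end TateSplitting

end Splitting

theorem Finsupp.mapDomain_apply_perm_apply {ι F M : Type*} [AddCommMonoid M] {c : ι → F}
    {π : Equiv.Perm F} (hfix : ∀ g, π g = g ↔ g ∈ Set.range c) (w : ι →₀ M) (g : F) :
    mapDomain c w (π g) = mapDomain c w g := by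
  by_cases hg : π g = g
  · rw [hg]
  · rw [mapDomain_of_notMem_range _ _ ((hfix g).not.mp hg),
      mapDomain_of_notMem_range _ _ ((hfix _).not.mp fun h => hg (π.injective h))]

theorem Finsupp.mapDomain_comapDomain_apply {α β M : Type*} [AddCommMonoid M] {f : α → β}
    [DecidablePred (· ∈ Set.range f)]
    (hf : Function.Injective f) (X : β →₀ M) (g : β) :
    mapDomain f (comapDomain f X hf.injOn) g = if g ∈ Set.range f then X g else 0 := by
  split_ifs with hg
  · obtain ⟨i, rfl⟩ := hg
    rw [mapDomain_apply hf, comapDomain_apply]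
  · exact mapDomain_of_notMem_range _ _ hg

namespace Module.Basis

variable {k T F : Type*} [CommRing k] [AddCommGroup T] [Module k T] (b : Module.Basis F k T)
  {π : Equiv.Perm F} {σ : Module.End k T}

theorem repr_apply_of_apply_perm (hσ : ∀ g, σ (b (π g)) = b g) (x : T) (g : F) :
    b.repr (σ x) g = b.repr x (π g) := by
  have key : Finsupp.lapply g ∘ₗ b.repr.toLinearMap ∘ₗ σ =
      Finsupp.lapply (π g) ∘ₗ b.repr.toLinearMap := by
    classical
    refine b.ext fun f => ?_
    have hf : σ (b f) = b (π.symm f) := by simpa using hσ (π.symm f)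
    simp only [LinearMap.comp_apply, LinearEquiv.coe_coe, Finsupp.lapply_apply, hf, repr_self,
      Finsupp.single_apply, Equiv.symm_apply_eq]
  exact LinearMap.congr_fun key x

theorem repr_pow_apply_of_apply_perm (hσ : ∀ g, σ (b (π g)) = b g) (i : ℕ) (x : T) (g : F) :
    b.repr ((σ ^ i) x) g = b.repr x ((π ^ i) g) := by
  induction i generalizing x with
  | zero => rfl
  | succ i ih => rw [pow_succ, Module.End.mul_apply, ih, b.repr_apply_of_apply_perm hσ,
      ← Equiv.Perm.mul_apply, ← pow_succ']

theorem repr_sum_pow_apply_of_apply_perm (hσ : ∀ g, σ (b (π g)) = b g) (p : ℕ) (x : T) (g : F) :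
    b.repr ((∑ i ∈ range p, σ ^ i) x) g = ∑ i ∈ range p, b.repr x ((π ^ i) g) := by
  simp [LinearMap.sum_apply, b.repr_pow_apply_of_apply_perm hσ]

theorem repr_apply_perm_of_one_sub_apply_eq_zero (hσ : ∀ g, σ (b (π g)) = b g) {x : T}
    (hx : (1 - σ) x = 0) (g : F) : b.repr x (π g) = b.repr x g := by
  have := congrArg (b.repr · g) hx
  simp only [LinearMap.sub_apply, Module.End.one_apply, map_sub, Finsupp.sub_apply,
    b.repr_apply_of_apply_perm hσ, map_zero, Finsupp.coe_zero, Pi.zero_apply] at this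
  exact (sub_eq_zero.mp this).symm

variable {p : ℕ} [Fact p.Prime]

open Classical in
theorem exists_repr_sum_pow_apply_eq (hσ : ∀ g, σ (b (π g)) = b g) (hπ : π ^ p = 1) {x : T}
    (hx : (1 - σ) x = 0) :
    ∃ y, ∀ g, b.repr ((∑ i ∈ range p, σ ^ i) y) g = if π g = g then 0 else b.repr x g := by
  obtain ⟨Y, hY⟩ := Equiv.Perm.exists_sum_range_pow_apply_eq hπ (b.repr x)
    (b.repr_apply_perm_of_one_sub_apply_eq_zero hσ hx)
  refine ⟨b.repr.symm Y, fun g => ?_⟩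
  rw [b.repr_sum_pow_apply_of_apply_perm hσ, LinearEquiv.apply_symm_apply, hY]

variable {ι : Type*} [IsDomain k] [CharP k p]

noncomputable def tateSplitting (hσ : ∀ g, σ (b (π g)) = b g) (hπ : π ^ p = 1) (c : ι → F)
    (hc : Function.Injective c) (hfix : ∀ g, π g = g ↔ g ∈ Set.range c) :
    TateSplitting σ (∑ i ∈ range p, σ ^ i) (ι →₀ k) :=
  have hfix_c (i : ι) : π (c i) = c i := (hfix _).mpr ⟨i, rfl⟩
  TateSplitting.ofSumPow p (Finsupp.lcomapDomain c hc ∘ₗ b.repr.toLinearMap)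
    (b.repr.symm.toLinearMap ∘ₗ Finsupp.lmapDomain k k c)
    (fun w => by
      simp only [LinearMap.comp_apply, LinearEquiv.coe_coe, LinearEquiv.apply_symm_apply]
      exact Finsupp.leftInverse_lcomapDomain_mapDomain c hc w)
    (fun w => b.ext_elem fun g => by
      simp only [LinearMap.comp_apply, LinearEquiv.coe_coe, LinearMap.sub_apply, map_sub,
        Module.End.one_apply, Finsupp.sub_apply, b.repr_apply_of_apply_perm hσ,
        LinearEquiv.apply_symm_apply, Finsupp.lmapDomain_apply,
        Finsupp.mapDomain_apply_perm_apply hfix, sub_self, map_zero, Finsupp.coe_zero,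
        Pi.zero_apply])
    (fun w => b.ext_elem fun g => by
      simp only [b.repr_sum_pow_apply_of_apply_perm hσ, LinearMap.comp_apply, LinearEquiv.coe_coe,
        LinearEquiv.apply_symm_apply, Finsupp.lmapDomain_apply,
        Equiv.Perm.sum_range_pow_apply_eq_zero p (Finsupp.mapDomain_apply_perm_apply hfix w),
        map_zero, Finsupp.coe_zero, Pi.zero_apply])
    (fun x => Finsupp.ext fun i => by
      simp [b.repr_pow_apply_of_apply_perm hσ,
        Equiv.Perm.pow_apply_eq_self_of_apply_eq_self (hfix_c i)])
    (fun x => Finsupp.ext fun i => by simp [b.repr_apply_of_apply_perm hσ, hfix_c])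
    (fun x hx => by
      classical
      obtain ⟨y, hy⟩ := b.exists_repr_sum_pow_apply_eq hσ hπ hx
      refine ⟨y, b.ext_elem fun g => ?_⟩
      simp only [hy, map_sub, Finsupp.sub_apply, LinearMap.comp_apply, LinearEquiv.coe_coe,
        LinearEquiv.apply_symm_apply, Finsupp.lmapDomain_apply, Finsupp.lcomapDomain_apply,
        Finsupp.mapDomain_comapDomain_apply hc, hfix]
      split_ifs <;> simp)

end Module.Basis

theorem Module.Basis.reindex_piTensorProduct_apply_comp {k V ι κ κ' : Type*} [CommRing k]
    [AddCommGroup V] [Module k V] [Finite κ] [Finite κ'] (eV : Module.Basis ι k V) (e : κ ≃ κ')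
    (g : κ' → ι) :
    PiTensorProduct.reindex k (fun _ => V) e (Basis.piTensorProduct (fun _ => eV) (g ∘ e)) =
      Basis.piTensorProduct (fun _ => eV) g := by
  simp [Basis.piTensorProduct_apply, PiTensorProduct.reindex_tprod]

theorem Equiv.Perm.arrowCongr_symm_refl_pow_apply {κ ι : Type*} (e : Equiv.Perm κ) (n : ℕ)
    (g : κ → ι) :
    ((e.symm.arrowCongr (Equiv.refl ι) : Equiv.Perm (κ → ι)) ^ n) g = g ∘ ⇑(e ^ n) := by
  induction n generalizing g with
  | zero => rfl
  | succ n ih =>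
    rw [pow_succ, Equiv.Perm.mul_apply, ih, pow_succ']
    rfl

theorem finRotate_pow_self (p : ℕ) [Fact p.Prime] : finRotate p ^ p = 1 := by
  have hcycle := isCycle_finRotate_of_le (Fact.out : p.Prime).two_le
  have := pow_orderOf_eq_one (finRotate p)
  rwa [hcycle.orderOf, support_finRotate_of_le (Fact.out : p.Prime).two_le, card_univ,
    Fintype.card_fin] at this

theorem eq_const_of_comp_finRotate {ι : Type*} {p : ℕ} [Fact p.Prime] {g : Fin p → ι}
    (hg : g ∘ finRotate p = g) (j : Fin p) : g j = g ⟨0, (Fact.out : p.Prime).pos⟩ := by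
  have h2 := (Fact.out : p.Prime).two_le
  have hmoved (i : Fin p) : finRotate p i ≠ i := by
    rw [← Equiv.Perm.mem_support, support_finRotate_of_le h2]
    exact mem_univ i
  obtain ⟨n, hn⟩ := (isCycle_finRotate_of_le h2).exists_pow_eq (hmoved ⟨0, _⟩) (hmoved j)
  rw [← hn]
  exact Equiv.Perm.apply_pow_apply_of_invariant (congrFun hg) n _

noncomputable def frobeniusModuleEquiv (k : Type) (p : ℕ) [Field k] [Fact p.Prime] [CharP k p]
    [PerfectRing k p] : k ≃ₗ[k] FrobeniusModule k p :=
  { (frobeniusEquiv k p : k ≃+ k) with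
    map_smul' := map_mul (frobenius k p) }

noncomputable def frobeniusTwistEquiv (k : Type) (p : ℕ) [Field k] [Fact p.Prime] [CharP k p]
    [PerfectRing k p] (V : Type) [AddCommGroup V] [Module k V] : V ≃ₗ[k] FrobeniusTwist k p V :=
  (TensorProduct.rid k V).symm ≪≫ₗ
    TensorProduct.congr (LinearEquiv.refl k V) (frobeniusModuleEquiv k p)

theorem statement15_general
    (k : Type) [Field k] (p : ℕ) [Fact p.Prime] [CharP k p] [PerfectRing k p]
    (V : Type) [AddCommGroup V] [Module k V]
    (σ : Module.End k (⨂[k] (_ : Fin p), V))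
    (hσ : σ = (PiTensorProduct.reindex k (fun _ : Fin p => V) (finRotate p)).toLinearMap)
    (N : Module.End k (⨂[k] (_ : Fin p), V)) (hN : N = ∑ i ∈ Finset.range p, σ ^ i)
    -- the differential of the two-term complex `C(V)`, induced by the norm `N`:
    (dV : ((⨂[k] (_ : Fin p), V) ⧸ LinearMap.range (1 - σ)) →ₗ[k] LinearMap.ker (1 - σ))
    (hdV : ∀ y : ⨂[k] (_ : Fin p), V,
      ((dV (Submodule.Quotient.mk y) : LinearMap.ker (1 - σ)) : ⨂[k] (_ : Fin p), V)
        = N y) :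
    ∃ (a : (LinearMap.ker (1 - σ)) →ₗ[k] FrobeniusTwist k p V)
      (b : FrobeniusTwist k p V →ₗ[k]
        ((⨂[k] (_ : Fin p), V) ⧸ LinearMap.range (1 - σ))),
      -- `a` and `b` are maps of complexes:
      (a ∘ₗ dV = 0) ∧ (dV ∘ₗ b = 0) ∧
      -- quasiexactness:
      Function.Surjective a ∧ Function.Injective b ∧
      (∀ dbar : (((⨂[k] (_ : Fin p), V) ⧸ LinearMap.range (1 - σ)) ⧸
          LinearMap.range b) →ₗ[k] LinearMap.ker a,
        (∀ y : ((⨂[k] (_ : Fin p), V) ⧸ LinearMap.range (1 - σ)),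
          ((dbar (Submodule.Quotient.mk y) : LinearMap.ker a) : LinearMap.ker (1 - σ))
            = dV y) →
        Function.Bijective dbar) := by
  subst hσ hN
  let ι := Module.Basis.ofVectorSpaceIndex k V
  let eV : Module.Basis ι k V := Module.Basis.ofVectorSpace k V
  let π : Equiv.Perm (Fin p → ι) := (finRotate p).symm.arrowCongr (Equiv.refl ι)
  have hπ : π ^ p = 1 := by
    ext g : 1
    rw [Equiv.Perm.arrowCongr_symm_refl_pow_apply, finRotate_pow_self]
    rfl
  have hfix (g : Fin p → ι) : π g = g ↔ g ∈ Set.range (Function.const (Fin p)) :=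
    ⟨fun h => ⟨_, funext fun j => (eq_const_of_comp_finRotate h j).symm⟩, by rintro ⟨i, rfl⟩; rfl⟩
  have hσ (g : Fin p → ι) :
      PiTensorProduct.reindex k (fun _ => V) (finRotate p)
        (Basis.piTensorProduct (fun _ => eV) (π g)) = Basis.piTensorProduct (fun _ => eV) g :=
    eV.reindex_piTensorProduct_apply_comp (finRotate p) g
  exact (((Basis.piTensorProduct fun _ => eV).tateSplitting hσ hπ _ Function.const_injective
    hfix).congr (eV.repr.symm ≪≫ₗ frobeniusTwistEquiv k p V)).exists_quasiexact dV hdV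

theorem statement15
    (k : Type) [Field k] (p : ℕ) [Fact p.Prime] [CharP k p] [ExpChar k p] [PerfectRing k p]
    (V : Type) [AddCommGroup V] [Module k V]
    (σ : Module.End k (⨂[k] (_ : Fin p), V))
    (hσ : σ = (PiTensorProduct.reindex k (fun _ : Fin p => V) (finRotate p)).toLinearMap)
    (N : Module.End k (⨂[k] (_ : Fin p), V)) (hN : N = ∑ i ∈ Finset.range p, σ ^ i)
    -- the differential of the two-term complex `C(V)`, induced by the norm `N`:
    (dV : ((⨂[k] (_ : Fin p), V) ⧸ LinearMap.range (1 - σ)) →ₗ[k] LinearMap.ker (1 - σ))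
    (hdV : ∀ y : ⨂[k] (_ : Fin p), V,
      ((dV (Submodule.Quotient.mk y) : LinearMap.ker (1 - σ)) : ⨂[k] (_ : Fin p), V)
        = N y) :
    ∃ (a : (LinearMap.ker (1 - σ)) →ₗ[k] FrobeniusTwist k p V)
      (b : FrobeniusTwist k p V →ₗ[k]
        ((⨂[k] (_ : Fin p), V) ⧸ LinearMap.range (1 - σ))),
      -- `a` and `b` are maps of complexes:
      (a ∘ₗ dV = 0) ∧ (dV ∘ₗ b = 0) ∧
      -- quasiexactness:
      Function.Surjective a ∧ Function.Injective b ∧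
      (∀ dbar : (((⨂[k] (_ : Fin p), V) ⧸ LinearMap.range (1 - σ)) ⧸
          LinearMap.range b) →ₗ[k] LinearMap.ker a,
        (∀ y : ((⨂[k] (_ : Fin p), V) ⧸ LinearMap.range (1 - σ)),
          ((dbar (Submodule.Quotient.mk y) : LinearMap.ker a) : LinearMap.ker (1 - σ))
            = dV y) →
        Function.Bijective dbar) :=
  statement15_general k p V σ hσ N hN dV hdV
end

section
/- Let K_•([n]) denote the standard cellular chain complex of the circle S¹ with respect to the cellular decomposition with n vertices and n edges. Then the assignment [n] ↦ K_•([n]) is functorial in the cyclic category Λ, and there is an exact sequence 0 → Z → K₁ → K₀ → Z → 0 in the category of functors Fun(Λ, Z), where the outer terms are the constant functor Z, the map K₁ → K₀ is the cellular boundary, Z → K₁ is the fundamental class, and K₀ → Z is the augmentation. -/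
open CategoryTheory

/-! Connes' cyclic category `Λ`, in its standard combinatorial model: the object `[n]`
(here indexed by `n : ℕ`, with `n+1` vertices and `n+1` edges, corresponding to the
cellular decomposition of the circle with `n+1` cells of each dimension) and morphisms
`[m] → [n]` given by monotone maps `f : ℤ → ℤ` with `f(x + (m+1)) = f(x) + (n+1)`,
taken modulo the shift `f ↦ f + (n+1)`. -/

/-- Monotone periodic maps `ℤ → ℤ`, the morphisms of the universal cover `Λ∞`. -/
def CycMap (m n : ℕ) : Type :=
  {f : ℤ → ℤ // Monotone f ∧ ∀ x : ℤ, f (x + (m + 1)) = f x + (n + 1)}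

lemma CycMap.shift {m n : ℕ} (g : CycMap m n) (t x : ℤ) :
    g.1 (x + t * (m + 1)) = g.1 x + t * (n + 1) := by
  induction t using Int.induction_on with
  | zero => simp
  | succ s ih =>
      have h1 : x + ((s : ℤ) + 1) * (m + 1) = (x + s * (m + 1)) + (m + 1) := by ring
      rw [h1, g.2.2, ih]; ring
  | pred s ih =>
      have e1 : x + (-(s : ℤ) - 1) * (m + 1) =
          (x + (-(s : ℤ)) * (m + 1)) - (m + 1) := by ring
      have h2 := g.2.2 ((x + (-(s : ℤ)) * (m + 1)) - (m + 1))
      have e2 : (x + (-(s : ℤ)) * (m + 1)) - (m + 1) + (m + 1) =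
          x + (-(s : ℤ)) * (m + 1) := by ring
      rw [e2, ih] at h2
      have h3 : g.1 (x + (-(s : ℤ)) * (m + 1) - (m + 1)) =
          g.1 x + (-(s : ℤ)) * (n + 1) - (n + 1) := by omega
      rw [e1, h3]; ring

/-- Two periodic maps give the same morphism of `Λ` iff they differ by a period. -/
def cycSetoid (m n : ℕ) : Setoid (CycMap m n) where
  r f g := ∃ t : ℤ, ∀ x : ℤ, g.1 x = f.1 x + t * (n + 1)
  iseqv := by
    refine ⟨fun f => ⟨0, by simp⟩, ?_, ?_⟩
    · rintro f g ⟨t, h⟩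
      exact ⟨-t, fun x => by rw [h x]; ring⟩
    · rintro f g h ⟨t, hfg⟩ ⟨s, hgh⟩
      exact ⟨t + s, fun x => by rw [hgh x, hfg x]; ring⟩

/-- The cyclic category `Λ`: the object `n : ℕ` is the cellular decomposition of `S¹`
with `n+1` vertices and `n+1` edges. -/
abbrev CyclicCat : Type := ℕ

/-- Composition of periodic monotone maps. -/
def CycMap.comp {l m n : ℕ} (f : CycMap l m) (g : CycMap m n) : CycMap l n :=
  ⟨g.1 ∘ f.1, ⟨g.2.1.comp f.2.1, fun x => by
    simp only [Function.comp_apply, f.2.2, g.2.2]⟩⟩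

instance : Category CyclicCat where
  Hom m n := Quotient (cycSetoid m n)
  id n := Quotient.mk _ ⟨id, monotone_id, fun x => rfl⟩
  comp {l m n} f g :=
    Quotient.map₂ CycMap.comp
      (by
        rintro f f' ⟨t, hf⟩ g g' ⟨s, hg⟩
        refine ⟨s + t, fun x => ?_⟩
        show g'.1 (f'.1 x) = g.1 (f.1 x) + (s + t) * (n + 1)
        rw [hf x, hg (f.1 x + t * (m + 1)), CycMap.shift g t (f.1 x)]
        ring) f g
  id_comp f := Quotient.inductionOn f (fun f => rfl)
  comp_id f := Quotient.inductionOn f (fun f => rfl)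
  assoc f g h := Quotient.inductionOn₃ f g h (fun f g h => rfl)

/-- The vertex of `[n]` determined by an integer (vertices are `ℤ/(n+1)`). -/
def toVtx (n : ℕ) (x : ℤ) : ZMod (n + 1) := (x : ZMod (n + 1))

/-!
A morphism `[m] → [n]` is represented by a monotone `g : ℤ → ℤ` with
`g (x + m + 1) = g x + n + 1`. Such a `g` has an upper adjoint `g♯` (`g x ≤ j ↔ x ≤ g♯ j`) of
the same kind, and `g ↦ g♯` reverses composition and respects the shift, so it descends to `Λ`.
Vertices are pushed forward along `g`, while the edge `[j, j + 1]` of `[n]` is covered by exactly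
one edge of `[m]`, namely `[g♯ j, g♯ j + 1]`: on edge coefficients `K₁(g)` is pullback along `g♯`.
The boundary is natural because the fibre of `g` over `j` is the interval `(g♯ (j - 1), g♯ j]`,
over which the boundary telescopes. Exactness holds objectwise: the cycle graph with `n + 1`
vertices has `H₁ = H₀ = ℤ`.
-/

lemma Int.sum_Ioc_sub_one_sub {M : Type*} [AddCommGroup M] (Ψ : ℤ → M) {a b : ℤ} (hab : a ≤ b) :
    ∑ j ∈ Finset.Ioc a b, (Ψ (j - 1) - Ψ j) = Ψ a - Ψ b := by
  induction b, hab using Int.leInduction with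
  | base => simp
  | succ b hab ih =>
    rw [← Finset.insert_Ioc_right_eq_Ioc_add_one hab, Finset.sum_insert (by simp), ih,
      add_sub_cancel_right]
    abel

lemma ZMod.card_filter_range_natCast_eq {p L : ℕ} [NeZero p] (hL : L ≤ p) (x : ZMod p) :
    ((Finset.range L).filter (fun t : ℕ => (t : ZMod p) = x)).card =
      if x.val < L then 1 else 0 := by
  have hfilter : ∀ t ∈ Finset.range L, (t : ZMod p) = x ↔ t = x.val := fun t ht =>
    ⟨fun h => h ▸ (ZMod.val_cast_of_lt ((Finset.mem_range.mp ht).trans_le hL)).symm,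
      fun h => h ▸ ZMod.natCast_zmod_val x⟩
  rw [Finset.filter_congr hfilter, Finset.filter_eq']
  split_ifs <;> simp_all

lemma ZMod.apply_eq_apply_zero_of_forall_sub_one {p : ℕ} {β : Type*} {ψ : ZMod p → β}
    (h : ∀ w, ψ (w - 1) = ψ w) (w : ZMod p) : ψ w = ψ 0 := by
  have hper : Function.Periodic (fun k : ℤ => ψ k) 1 := fun k => by
    simpa using (h (k + 1)).symm
  simpa using hper.int_mul_eq (w.cast : ℤ)

lemma ZMod.exists_sub_one_sub_eq {n : ℕ} {M : Type*} [AddCommGroup M] (φ : ZMod (n + 1) → M)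
    (h : ∑ v, φ v = 0) : ∃ ψ : ZMod (n + 1) → M, ∀ w, ψ (w - 1) - ψ w = φ w := by
  refine ⟨fun w => -∑ k ∈ Finset.range (w.val + 1), φ k, fun w => ?_⟩
  have hsum : ∑ k ∈ Finset.range (n + 1), φ k = 0 := by
    rw [← h, ← Fin.sum_univ_eq_sum_range]
    exact Finset.sum_congr rfl fun v _ => congrArg φ (ZMod.natCast_zmod_val (n := n + 1) v)
  obtain ⟨k, hk, rfl⟩ : ∃ k < n + 1, (k : ZMod (n + 1)) = w :=
    ⟨w.val, w.val_lt, ZMod.natCast_zmod_val w⟩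
  cases k with
  | zero => simp [ZMod.val_neg_one, hsum]
  | succ k =>
    dsimp only
    have hpred : ((k + 1 : ℕ) : ZMod (n + 1)) - 1 = k := by push_cast; ring
    rw [hpred, ZMod.val_cast_of_lt (by omega), ZMod.val_cast_of_lt hk,
      Finset.sum_range_succ _ (k + 1)]
    abel

namespace LinearMap

variable (R M : Type*) [Semiring R] [AddCommMonoid M] [Module R M]
  {α β γ : Type*} [Fintype α] [DecidableEq β]

def pushforward (a : α → β) : (α → M) →ₗ[R] (β → M) where
  toFun φ w := ∑ v ∈ Finset.univ.filter (fun v => a v = w), φ v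
  map_add' _ _ := funext fun _ => Finset.sum_add_distrib
  map_smul' _ _ := funext fun _ => by simp [Finset.smul_sum]

lemma pushforward_apply (a : α → β) (φ : α → M) (w : β) :
    pushforward R M a φ w = ∑ v ∈ Finset.univ.filter (fun v => a v = w), φ v :=
  rfl

lemma pushforward_id [DecidableEq α] : pushforward R M (_root_.id : α → α) = LinearMap.id :=
  LinearMap.ext fun φ => funext fun w => by simp [pushforward_apply, Finset.filter_eq']

lemma pushforward_comp [Fintype β] [DecidableEq γ] (a : α → β) (b : β → γ) :
    pushforward R M (b ∘ a) = pushforward R M b ∘ₗ pushforward R M a := by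
  refine LinearMap.ext fun φ => funext fun w => ?_
  simp only [comp_apply, pushforward_apply, Function.comp_apply]
  rw [← Finset.sum_fiberwise_of_maps_to (g := a) (t := Finset.univ.filter fun u => b u = w)
    (by simp)]
  refine Finset.sum_congr rfl fun u hu => ?_
  rw [Finset.filter_filter]
  refine Finset.sum_congr (Finset.filter_congr fun v _ => ?_) fun _ _ => rfl
  rw [(Finset.mem_filter.mp hu).2.symm]
  exact ⟨And.right, fun h => ⟨h ▸ rfl, h⟩⟩

end LinearMap

section toVtx

variable {n : ℕ}

lemma toVtx_eq_toVtx_iff {a b : ℤ} : toVtx n a = toVtx n b ↔ ∃ t : ℤ, b = a + t * (n + 1) := by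
  unfold toVtx
  rw [ZMod.intCast_eq_intCast_iff_dvd_sub]
  push_cast
  exact ⟨fun ⟨t, ht⟩ => ⟨t, by linarith⟩, fun ⟨t, ht⟩ => ⟨t, by rw [ht]; ring⟩⟩

lemma toVtx_add_mul (a t : ℤ) : toVtx n (a + t * (n + 1)) = toVtx n a :=
  (toVtx_eq_toVtx_iff.mpr ⟨t, rfl⟩).symm

lemma toVtx_natCast_val (w : ZMod (n + 1)) : toVtx n (w.val : ℤ) = w := by
  rw [toVtx, Int.cast_natCast, ZMod.natCast_zmod_val]

lemma toVtx_sub_one (x : ℤ) : toVtx n (x - 1) = toVtx n x - 1 := by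
  simp [toVtx]

lemma eq_of_toVtx_eq {a b : ℤ} (h : toVtx n a = toVtx n b) (hab : |b - a| < n + 1) : a = b := by
  unfold toVtx at h
  rw [ZMod.intCast_eq_intCast_iff_dvd_sub] at h
  have := Int.eq_zero_of_abs_lt_dvd (by exact_mod_cast h) hab
  omega

end toVtx

namespace CycMap

variable {l m n : ℕ}

protected def id (n : ℕ) : CycMap n n := ⟨id, monotone_id, fun _ => rfl⟩

lemma apply_sub (g : CycMap m n) (x : ℤ) : g.1 (x - (m + 1)) = g.1 x - (n + 1) := by
  have := g.2.2 (x - (m + 1))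
  rw [sub_add_cancel] at this
  omega

lemma apply_add_one_le (g : CycMap m n) (x : ℤ) : g.1 (x + 1) ≤ g.1 x + (n + 1) :=
  g.2.2 x ▸ g.2.1 (by omega)

lemma toVtx_apply_eq {g : CycMap m n} {a b : ℤ} (h : toVtx m a = toVtx m b) :
    toVtx n (g.1 a) = toVtx n (g.1 b) := by
  obtain ⟨t, rfl⟩ := toVtx_eq_toVtx_iff.mp h
  rw [g.shift, toVtx_add_mul]

def toZMod (g : CycMap m n) (v : ZMod (m + 1)) : ZMod (n + 1) := toVtx n (g.1 v.val)

lemma toZMod_toVtx (g : CycMap m n) (x : ℤ) : g.toZMod (toVtx m x) = toVtx n (g.1 x) :=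
  toVtx_apply_eq (toVtx_natCast_val _)

lemma toZMod_comp (f : CycMap l m) (g : CycMap m n) :
    (f.comp g).toZMod = g.toZMod ∘ f.toZMod :=
  funext fun v => (g.toZMod_toVtx (f.1 v.val)).symm

lemma toZMod_id : (CycMap.id n).toZMod = id :=
  funext toVtx_natCast_val

lemma toZMod_eq_of_rel {f g : CycMap m n} (h : cycSetoid m n f g) : f.toZMod = g.toZMod := by
  obtain ⟨t, ht⟩ := h
  funext v
  rw [toZMod, toZMod, ht, toVtx_add_mul]

lemma exists_lt_apply (g : CycMap m n) (j : ℤ) : ∃ x, j < g.1 x := by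
  refine ⟨(|j - g.1 0| + 1) * (m + 1), ?_⟩
  rw [← zero_add (_ * _), g.shift]
  nlinarith [le_abs_self (j - g.1 0), abs_nonneg (j - g.1 0), (n.cast_nonneg : (0 : ℤ) ≤ n)]

lemma exists_apply_le (g : CycMap m n) (j : ℤ) : ∃ x, g.1 x ≤ j := by
  refine ⟨-(|j - g.1 0| + 1) * (m + 1), ?_⟩
  rw [← zero_add (_ * _), g.shift]
  nlinarith [neg_abs_le (j - g.1 0), abs_nonneg (j - g.1 0), (n.cast_nonneg : (0 : ℤ) ≤ n)]

lemma exists_isGreatest (g : CycMap m n) (j : ℤ) : ∃ d, IsGreatest {x | g.1 x ≤ j} d := by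
  obtain ⟨b, hb⟩ := g.exists_lt_apply j
  exact Int.exists_greatest_of_bdd
    ⟨b, fun _ hx => le_of_lt (g.2.1.reflect_lt (hx.trans_lt hb))⟩ (g.exists_apply_le j)

noncomputable def upperAdjoint (g : CycMap m n) (j : ℤ) : ℤ := (g.exists_isGreatest j).choose

lemma gc (g : CycMap m n) : GaloisConnection g.1 g.upperAdjoint := fun _ j =>
  ⟨fun h => (g.exists_isGreatest j).choose_spec.2 h,
    fun h => (g.2.1 h).trans (g.exists_isGreatest j).choose_spec.1⟩

lemma upperAdjoint_add (g : CycMap m n) (j : ℤ) :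
    g.upperAdjoint (j + (n + 1)) = g.upperAdjoint j + (m + 1) :=
  eq_of_forall_le_iff fun x => by
    rw [← g.gc, show x ≤ g.upperAdjoint j + (m + 1) ↔ x - (m + 1) ≤ g.upperAdjoint j by omega,
      ← g.gc, g.apply_sub]
    omega

noncomputable def adjoint (g : CycMap m n) : CycMap n m :=
  ⟨g.upperAdjoint, g.gc.monotone_u, g.upperAdjoint_add⟩

lemma gc_adjoint (g : CycMap m n) : GaloisConnection g.1 g.adjoint.1 := g.gc

lemma adjoint_comp (f : CycMap l m) (g : CycMap m n) :
    (f.comp g).adjoint = g.adjoint.comp f.adjoint :=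
  Subtype.ext <| funext fun _ => (f.comp g).gc_adjoint.u_unique
    (f.gc_adjoint.compose g.gc_adjoint) fun _ => rfl

lemma adjoint_id : (CycMap.id n).adjoint = CycMap.id n :=
  Subtype.ext <| funext fun _ => (CycMap.id n).gc_adjoint.u_unique GaloisConnection.id
    fun _ => rfl

lemma adjoint_rel {f g : CycMap m n} (h : cycSetoid m n f g) :
    cycSetoid n m f.adjoint g.adjoint := by
  obtain ⟨t, ht⟩ := h
  refine ⟨-t, fun j => eq_of_forall_le_iff fun x => ?_⟩
  rw [← g.gc_adjoint, ht, ← f.adjoint.shift, ← f.gc_adjoint]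
  constructor <;> intro <;> linarith

lemma apply_eq_iff_mem_Ioc (g : CycMap m n) {x j : ℤ} :
    g.1 x = j ↔ x ∈ Finset.Ioc (g.adjoint.1 (j - 1)) (g.adjoint.1 j) := by
  rw [Finset.mem_Ioc, ← not_le, ← g.gc_adjoint, ← g.gc_adjoint]
  omega

lemma adjoint_apply_eq_iff (g : CycMap m n) {j v : ℤ} :
    g.adjoint.1 j = v ↔ g.1 v ≤ j ∧ j < g.1 (v + 1) := by
  rw [← not_le, g.gc_adjoint, g.gc_adjoint]
  omega

lemma sum_filter_toZMod_eq {M : Type*} [AddCommMonoid M] (g : CycMap m n)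
    (F : ZMod (m + 1) → M) (j : ℤ) :
    ∑ v ∈ Finset.univ.filter (fun v => g.toZMod v = toVtx n j), F v =
      ∑ x ∈ Finset.Ioc (g.adjoint.1 (j - 1)) (g.adjoint.1 j), F (toVtx m x) := by
  symm
  refine Finset.sum_nbij (toVtx m) (fun x hx => ?_) (fun x hx y hy hxy => ?_) (fun v hv => ?_)
    fun _ _ => rfl
  · rw [Finset.mem_filter, toZMod_toVtx, g.apply_eq_iff_mem_Ioc.mpr hx]
    exact ⟨Finset.mem_univ _, rfl⟩
  · have hlen := g.adjoint.apply_add_one_le (j - 1)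
    rw [sub_add_cancel] at hlen
    simp only [Finset.coe_Ioc, Set.mem_Ioc] at hx hy
    exact eq_of_toVtx_eq hxy (abs_lt.mpr ⟨by omega, by omega⟩)
  · obtain ⟨t, ht⟩ := toVtx_eq_toVtx_iff.mp (Finset.mem_filter.mp hv).2
    refine ⟨v.val + t * (m + 1), ?_, by rw [toVtx_add_mul, toVtx_natCast_val]⟩
    rw [Finset.mem_coe, ← g.apply_eq_iff_mem_Ioc, g.shift]
    omega

lemma sum_filter_toZMod_sub {M : Type*} [AddCommGroup M] (g : CycMap m n)
    (ψ : ZMod (m + 1) → M) (w : ZMod (n + 1)) :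
    ∑ v ∈ Finset.univ.filter (fun v => g.toZMod v = w), (ψ (v - 1) - ψ v) =
      ψ (g.adjoint.toZMod (w - 1)) - ψ (g.adjoint.toZMod w) := by
  obtain ⟨j, rfl⟩ : ∃ j, toVtx n j = w := ⟨_, toVtx_natCast_val w⟩
  rw [sum_filter_toZMod_eq, ← toVtx_sub_one, toZMod_toVtx, toZMod_toVtx]
  simp only [← toVtx_sub_one]
  exact Int.sum_Ioc_sub_one_sub (ψ ∘ toVtx m) (g.adjoint.2.1 (by omega))

lemma card_filter_edges_eq (g : CycMap m n) (v : ZMod (m + 1)) (w : ZMod (n + 1)) :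
    ((Finset.range ((g.1 ((v.val : ℤ) + 1) - g.1 (v.val : ℤ)).toNat)).filter
        (fun t : ℕ => toVtx n (g.1 (v.val : ℤ) + (t : ℤ)) = w)).card =
      if g.adjoint.toZMod w = v then 1 else 0 := by
  set a := g.1 (v.val : ℤ)
  have hfilter : ∀ t : ℕ, toVtx n (a + t) = w ↔ (t : ZMod (n + 1)) = w - toVtx n a := by
    intro t
    rw [eq_sub_iff_add_eq, add_comm (t : ZMod (n + 1))]
    simp only [toVtx, Int.cast_add, Int.cast_natCast]
  have hlen := g.apply_add_one_le v.val
  rw [Finset.filter_congr fun t _ => hfilter t, ZMod.card_filter_range_natCast_eq (by omega)]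
  set k := (w - toVtx n a).val
  have hk : k < n + 1 := ZMod.val_lt _
  have hj : toVtx n (a + k) = w := by
    rw [hfilter, ZMod.natCast_zmod_val]
  have hlow : (v.val : ℤ) ≤ g.adjoint.1 (a + k) := g.gc_adjoint _ _ |>.mp (by omega)
  have hup : g.adjoint.1 (a + k) < v.val + (m + 1) := by
    rw [← not_le, ← g.gc_adjoint, g.2.2]
    omega
  have key : k < (g.1 (v.val + 1) - a).toNat ↔ toVtx m (g.adjoint.1 (a + k)) = v := by
    conv_rhs => rw [← toVtx_natCast_val v]
    constructor
    · intro hlt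
      rw [(g.adjoint_apply_eq_iff (v := v.val)).mpr ⟨by omega, by omega⟩]
    · intro h
      have := g.adjoint_apply_eq_iff.mp (eq_of_toVtx_eq h (abs_lt.mpr ⟨by omega, by omega⟩))
      omega
  rw [← hj, toZMod_toVtx]
  exact if_congr key rfl rfl

end CycMap

namespace CyclicCat

variable {l m n : CyclicCat}

def vertexMap (f : m ⟶ n) : ZMod (m + 1) → ZMod (n + 1) :=
  Quotient.lift CycMap.toZMod (fun _ _ => CycMap.toZMod_eq_of_rel) f

/-- An edge `w` of the target lies in the image of the edge `edgeMap f w` of the source. -/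
noncomputable def edgeMap (f : m ⟶ n) : ZMod (n + 1) → ZMod (m + 1) :=
  Quotient.lift (fun g : CycMap m n => g.adjoint.toZMod)
    (fun _ _ h => CycMap.toZMod_eq_of_rel (CycMap.adjoint_rel h)) f

lemma vertexMap_id : vertexMap (𝟙 n) = id := CycMap.toZMod_id

lemma vertexMap_comp (f : l ⟶ m) (g : m ⟶ n) : vertexMap (f ≫ g) = vertexMap g ∘ vertexMap f :=
  Quotient.inductionOn₂ f g CycMap.toZMod_comp

lemma edgeMap_id : edgeMap (𝟙 n) = id := by
  rw [edgeMap, ← CycMap.toZMod_id]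
  exact congrArg CycMap.toZMod CycMap.adjoint_id

lemma edgeMap_comp (f : l ⟶ m) (g : m ⟶ n) : edgeMap (f ≫ g) = edgeMap f ∘ edgeMap g :=
  Quotient.inductionOn₂ f g fun f g => by
    change (f.comp g).adjoint.toZMod = f.adjoint.toZMod ∘ g.adjoint.toZMod
    rw [CycMap.adjoint_comp, CycMap.toZMod_comp]

noncomputable def chains₀ : CyclicCat ⥤ ModuleCat ℤ where
  obj n := ModuleCat.of ℤ (ZMod (n + 1) → ℤ)
  map f := ModuleCat.ofHom (LinearMap.pushforward ℤ ℤ (vertexMap f))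
  map_id n := by rw [vertexMap_id, LinearMap.pushforward_id]; rfl
  map_comp f g := by rw [vertexMap_comp, LinearMap.pushforward_comp]; rfl

noncomputable def chains₁ : CyclicCat ⥤ ModuleCat ℤ where
  obj n := ModuleCat.of ℤ (ZMod (n + 1) → ℤ)
  map f := ModuleCat.ofHom (LinearMap.funLeft ℤ ℤ (edgeMap f))
  map_id n := by rw [edgeMap_id]; rfl
  map_comp f g := by rw [edgeMap_comp]; rfl

def cycleFundamentalClass (n : ℕ) : ℤ →ₗ[ℤ] (ZMod (n + 1) → ℤ) :=
  LinearMap.pi fun _ => LinearMap.id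

def cycleBoundary (n : ℕ) : (ZMod (n + 1) → ℤ) →ₗ[ℤ] (ZMod (n + 1) → ℤ) :=
  LinearMap.funLeft ℤ ℤ (· - 1) - LinearMap.id

def cycleAugmentation (n : ℕ) : (ZMod (n + 1) → ℤ) →ₗ[ℤ] ℤ where
  toFun φ := ∑ v, φ v
  map_add' _ _ := Finset.sum_add_distrib
  map_smul' _ _ := (Finset.mul_sum ..).symm

lemma cycleFundamentalClass_injective (n : ℕ) : Function.Injective (cycleFundamentalClass n) :=
  fun _ _ h => congrFun h 0

lemma exact_cycleFundamentalClass_cycleBoundary (n : ℕ) :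
    Function.Exact (cycleFundamentalClass n) (cycleBoundary n) := by
  intro ψ
  refine ⟨fun h => ⟨ψ 0, funext fun w => ?_⟩, fun ⟨c, hc⟩ => hc ▸ funext fun _ => sub_self c⟩
  refine (ZMod.apply_eq_apply_zero_of_forall_sub_one (fun w => ?_) w).symm
  exact sub_eq_zero.mp (congrFun h w)

lemma exact_cycleBoundary_cycleAugmentation (n : ℕ) :
    Function.Exact (cycleBoundary n) (cycleAugmentation n) := by
  intro φ
  refine ⟨fun h => ?_, ?_⟩
  · obtain ⟨ψ, hψ⟩ := ZMod.exists_sub_one_sub_eq φ h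
    exact ⟨ψ, funext hψ⟩
  · rintro ⟨ψ, rfl⟩
    change ∑ w, (ψ (w - 1) - ψ w) = 0
    rw [Finset.sum_sub_distrib, sub_eq_zero]
    exact Fintype.sum_equiv (Equiv.subRight 1) _ _ fun _ => rfl

lemma cycleAugmentation_surjective (n : ℕ) : Function.Surjective (cycleAugmentation n) :=
  fun c => ⟨Pi.single 0 c, by simp [cycleAugmentation]⟩

noncomputable def fundamentalClass :
    (Functor.const CyclicCat).obj (ModuleCat.of ℤ ℤ) ⟶ chains₁ where
  app n := ModuleCat.ofHom (cycleFundamentalClass n)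
  naturality _ _ _ := rfl

noncomputable def boundary : chains₁ ⟶ chains₀ where
  app n := ModuleCat.ofHom (cycleBoundary n)
  naturality _ _ f := Quotient.inductionOn f fun g =>
    ModuleCat.hom_ext <| LinearMap.ext fun ψ => funext fun w =>
      (g.sum_filter_toZMod_sub ψ w).symm

noncomputable def augmentation : chains₀ ⟶ (Functor.const CyclicCat).obj (ModuleCat.of ℤ ℤ) where
  app n := ModuleCat.ofHom (cycleAugmentation n)
  naturality _ _ f :=
    ModuleCat.hom_ext <| LinearMap.ext fun φ => Finset.sum_fiberwise Finset.univ (vertexMap f) φ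

end CyclicCat

theorem statement19 :
    ∃ (K₁ K₀ : CyclicCat ⥤ ModuleCat ℤ)
      (η₁ : ∀ n : ℕ, (K₁.obj (n : CyclicCat) ≅ ModuleCat.of ℤ (ZMod (n + 1) → ℤ)))
      (η₀ : ∀ n : ℕ, (K₀.obj (n : CyclicCat) ≅ ModuleCat.of ℤ (ZMod (n + 1) → ℤ)))
      (ι : (Functor.const CyclicCat).obj (ModuleCat.of ℤ ℤ) ⟶ K₁)
      (bd : K₁ ⟶ K₀)
      (aug : K₀ ⟶ (Functor.const CyclicCat).obj (ModuleCat.of ℤ ℤ)),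
      -- `K₀` acts on vertices by `v ↦ g(v)`:
      (∀ (m n : ℕ) (g : CycMap m n) (φ : ZMod (m + 1) → ℤ) (w : ZMod (n + 1)),
        (η₀ n).hom ((K₀.map (Quotient.mk (cycSetoid m n) g : (m : CyclicCat) ⟶ n))
          ((η₀ m).inv φ)) w =
        ∑ v ∈ Finset.univ.filter (fun v : ZMod (m + 1) => toVtx n (g.1 (v.val : ℤ)) = w),
          φ v) ∧
      -- `K₁` acts on edges by `e_v ↦ Σ_{j ∈ [g(v), g(v+1))} e_j`:
      (∀ (m n : ℕ) (g : CycMap m n) (ψ : ZMod (m + 1) → ℤ) (w : ZMod (n + 1)),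
        (η₁ n).hom ((K₁.map (Quotient.mk (cycSetoid m n) g : (m : CyclicCat) ⟶ n))
          ((η₁ m).inv ψ)) w =
        ∑ v : ZMod (m + 1), ψ v *
          ((Finset.range ((g.1 ((v.val : ℤ) + 1) - g.1 (v.val : ℤ)).toNat)).filter
            (fun t : ℕ => toVtx n (g.1 (v.val : ℤ) + (t : ℤ)) = w)).card) ∧
      -- the fundamental class, the boundary, and the augmentation:
      (∀ (n : ℕ) (c : ℤ) (w : ZMod (n + 1)),
        (η₁ n).hom (ι.app (n : CyclicCat) c) w = c) ∧
      (∀ (n : ℕ) (ψ : ZMod (n + 1) → ℤ) (w : ZMod (n + 1)),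
        (η₀ n).hom (bd.app (n : CyclicCat) ((η₁ n).inv ψ)) w = ψ (w - 1) - ψ w) ∧
      (∀ (n : ℕ) (φ : ZMod (n + 1) → ℤ),
        aug.app (n : CyclicCat) ((η₀ n).inv φ) = ∑ v : ZMod (n + 1), φ v) ∧
      -- exactness of `0 → ℤ → K₁ → K₀ → ℤ → 0` at each object of `Λ`:
      (∀ n : ℕ,
        Function.Injective (ι.app (n : CyclicCat)) ∧
        Function.Exact (ι.app (n : CyclicCat)) (bd.app (n : CyclicCat)) ∧
        Function.Exact (bd.app (n : CyclicCat)) (aug.app (n : CyclicCat)) ∧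
        Function.Surjective (aug.app (n : CyclicCat))) := by
  refine ⟨CyclicCat.chains₁, CyclicCat.chains₀, fun _ => Iso.refl _, fun _ => Iso.refl _,
    CyclicCat.fundamentalClass, CyclicCat.boundary, CyclicCat.augmentation,
    fun _ _ _ _ _ => rfl, fun m n g ψ w => ?_, fun _ _ _ => rfl, fun _ _ _ => rfl,
    fun _ _ => rfl, fun n => ⟨CyclicCat.cycleFundamentalClass_injective n,
      CyclicCat.exact_cycleFundamentalClass_cycleBoundary n,
      CyclicCat.exact_cycleBoundary_cycleAugmentation n, CyclicCat.cycleAugmentation_surjective n⟩⟩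
  change ψ (g.adjoint.toZMod w) = _
  simp_rw [g.card_filter_edges_eq, Nat.cast_ite, Nat.cast_one, Nat.cast_zero, mul_ite, mul_one,
    mul_zero, Finset.sum_ite_eq, Finset.mem_univ, if_true]
end
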